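/- Let d ≥ 1 be an integer, ε_small > 0, and ε_cell ∈ (0,1] with 1/ε_cell ∈ ℕ, and consider the grid cells of [0,1]^d, i.e., the closed cubes ∏_{i=1}^d [ℓᵢ·ε_cell, (ℓᵢ+1)·ε_cell] with ℓᵢ ∈ {0,…,1/ε_cell − 1}. Let B₁,…,Bₙ be pairwise disjoint closed balls in Euclidean ℝ^d, contained in [0,1]^d, each of radius at most ε_small. Then the total volume of those balls that are not contained in a single grid cell is at most 4·d·ε_small/ε_cell. -/

import Mathlib

open Metric Set MeasureTheory
open scoped Classical ENNReal

noncomputable section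

/-- The axis-parallel cube `[0,t]^d` in Euclidean space ℝ^d. -/
def cube (d : ℕ) (t : ℝ) : Set (EuclideanSpace ℝ (Fin d)) :=
  {x | ∀ i, x i ∈ Icc (0:ℝ) t}

/-- The grid cell `∏ᵢ [ℓᵢ·εc, (ℓᵢ+1)·εc]` of the `εc`-grid in ℝ^d. -/
def gridCell (d : ℕ) (εc : ℝ) (ℓ : Fin d → ℕ) : Set (EuclideanSpace ℝ (Fin d)) :=
  {x | ∀ i, x i ∈ Icc ((ℓ i : ℝ) * εc) (((ℓ i : ℝ) + 1) * εc)}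

/-- Coordinate distance is bounded by the Euclidean distance. -/
lemma coord_dist_le {d : ℕ} (x y : EuclideanSpace ℝ (Fin d)) (j : Fin d) :
    dist (x j) (y j) ≤ dist x y := by
  rw [EuclideanSpace.dist_eq]
  have h : dist (x j) (y j) = Real.sqrt (dist (x j) (y j) ^ 2) :=
    (Real.sqrt_sq dist_nonneg).symm
  rw [h]
  exact Real.sqrt_le_sqrt
    (Finset.single_le_sum (f := fun i => dist (x i) (y i) ^ 2)
      (fun i _ => sq_nonneg _) (Finset.mem_univ j))

/-- Volume of an axis-parallel box in Euclidean space. -/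
lemma volume_box {d : ℕ} (A B : Fin d → ℝ) :
    volume {x : EuclideanSpace ℝ (Fin d) | ∀ i, x i ∈ Icc (A i) (B i)} =
      ∏ i, ENNReal.ofReal (B i - A i) := by
  have hset : {x : EuclideanSpace ℝ (Fin d) | ∀ i, x i ∈ Icc (A i) (B i)} =
      (MeasurableEquiv.toLp 2 (Fin d → ℝ)).symm ⁻¹'
        (Set.univ.pi fun i => Icc (A i) (B i)) := by
    ext x
    exact ⟨fun h i _ => h i, fun h i => h i (Set.mem_univ i)⟩
  rw [hset,
    (EuclideanSpace.volume_preserving_symm_measurableEquiv_toLp (Fin d)).measure_preimage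
      ((MeasurableSet.univ_pi fun i => measurableSet_Icc).nullMeasurableSet),
    volume_pi_pi]
  simp [Real.volume_Icc]

/-- One-dimensional crossing lemma: if an interval `[a-ρ, a+ρ] ⊆ [0,1]` is not contained
in any grid interval, it contains a grid point `k·εc` with `1 ≤ k ≤ M`. -/
lemma onedim_cross (εc : ℝ) (hεc0 : 0 < εc) (M : ℕ) (hMεc : (M : ℝ) * εc = 1)
    (a ρ : ℝ) (hρ : 0 ≤ ρ) (h0 : 0 ≤ a - ρ) (h1 : a + ρ ≤ 1)
    (hno : ¬ ∃ ℓ : ℕ, ℓ < M ∧ (ℓ : ℝ) * εc ≤ a - ρ ∧ a + ρ ≤ ((ℓ : ℝ) + 1) * εc) :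
    ∃ k : ℕ, 1 ≤ k ∧ k ≤ M ∧ |a - (k : ℝ) * εc| ≤ ρ := by
  have hM1 : 1 ≤ M := by
    by_contra h
    push_neg at h
    interval_cases M
    simp at hMεc
  set ℓ := ⌊(a - ρ) / εc⌋₊ with hℓdef
  by_cases hlt : ℓ < M
  · have hfl : (ℓ : ℝ) ≤ (a - ρ) / εc := Nat.floor_le (by positivity)
    have hfu : (a - ρ) / εc < (ℓ : ℝ) + 1 := Nat.lt_floor_add_one _
    have h2 : a - ρ < ((ℓ : ℝ) + 1) * εc := by
      rw [div_lt_iff₀ hεc0] at hfu; linarith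
    have h3 : (ℓ : ℝ) * εc ≤ a - ρ := by
      rw [le_div_iff₀ hεc0] at hfl; linarith
    have h4 : ((ℓ : ℝ) + 1) * εc < a + ρ := by
      by_contra h
      push_neg at h
      exact hno ⟨ℓ, hlt, h3, h⟩
    refine ⟨ℓ + 1, by omega, ?_, ?_⟩
    · -- (ℓ+1)·εc < a + ρ ≤ 1 = M·εc, so ℓ+1 < M
      have : ((ℓ : ℝ) + 1) * εc < (M : ℝ) * εc := by linarith
      have := lt_of_mul_lt_mul_right this (le_of_lt hεc0)
      have : (ℓ : ℝ) + 1 < (M : ℝ) := this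
      exact_mod_cast this.le
    · have hcast : ((ℓ + 1 : ℕ) : ℝ) = (ℓ : ℝ) + 1 := by push_cast; ring
      rw [hcast, abs_le]
      constructor <;> linarith
  · -- ℓ ≥ M forces a - ρ ≥ 1, hence ρ = 0 and a = 1
    push_neg at hlt
    have : (M : ℝ) ≤ (a - ρ) / εc := by
      calc (M : ℝ) ≤ (ℓ : ℝ) := by exact_mod_cast hlt
        _ ≤ (a - ρ) / εc := Nat.floor_le (by positivity)
    have h5 : 1 ≤ a - ρ := by
      rw [le_div_iff₀ hεc0] at this; linarith
    have hρ0 : ρ = 0 := by linarith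
    have ha1 : a = 1 := by linarith
    exact ⟨M, hM1, le_refl M, by rw [hMεc, ha1, hρ0]; simp⟩

/-- Bound on the total volume of small hyperspheres cut by the grid (Lemma B.1): for
pairwise disjoint closed balls in the unit hypercube of radius at most `ε_small`, the
total volume of the balls not contained in a single grid cell of the `ε_cell`-grid is at
most `4·d·ε_small/ε_cell`. -/
theorem volume_of_cut_small_balls
    (d : ℕ) (hd : 1 ≤ d) (εs εc : ℝ) (hεs : 0 < εs) (hεc0 : 0 < εc) (hεc1 : εc ≤ 1)
    (M : ℕ) (hM : (M : ℝ) = 1 / εc)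
    (n : ℕ) (c : Fin n → EuclideanSpace ℝ (Fin d)) (r : Fin n → ℝ)
    (hr0 : ∀ i, 0 ≤ r i) (hrs : ∀ i, r i ≤ εs)
    (hdisj : ∀ i j, i ≠ j →
      Disjoint (closedBall (c i) (r i)) (closedBall (c j) (r j)))
    (hsub : ∀ i, closedBall (c i) (r i) ⊆ cube d 1) :
    ∑ i ∈ Finset.univ.filter (fun i : Fin n =>
        ¬ ∃ ℓ : Fin d → ℕ, (∀ j, ℓ j < M) ∧ closedBall (c i) (r i) ⊆ gridCell d εc ℓ),
      volume (closedBall (c i) (r i)) ≤ ENNReal.ofReal (4 * d * εs / εc) := by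
  classical
  have hMεc : (M : ℝ) * εc = 1 := by
    rw [hM]; field_simp
  set F := Finset.univ.filter (fun i : Fin n =>
      ¬ ∃ ℓ : Fin d → ℕ, (∀ j, ℓ j < M) ∧ closedBall (c i) (r i) ⊆ gridCell d εc ℓ) with hF
  -- the slab around the hyperplane x_j = k·εc, intersected with the unit cube
  set slab : Fin d → ℕ → Set (EuclideanSpace ℝ (Fin d)) := fun j k =>
    {x | ∀ i, x i ∈ Icc (if i = j then (k : ℝ) * εc - 2 * εs else 0)
                        (if i = j then (k : ℝ) * εc + 2 * εs else 1)} with hslab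
  -- center coordinates are at distance ≥ r from the boundary of the cube
  have hcoord : ∀ (i : Fin n) (j : Fin d), 0 ≤ c i j - r i ∧ c i j + r i ≤ 1 := by
    intro i j
    have hplus : c i + (r i) • EuclideanSpace.single j (1:ℝ) ∈ closedBall (c i) (r i) := by
      rw [mem_closedBall, dist_eq_norm]
      simp [norm_smul, abs_of_nonneg (hr0 i)]
    have hminus : c i - (r i) • EuclideanSpace.single j (1:ℝ) ∈ closedBall (c i) (r i) := by
      rw [mem_closedBall, dist_eq_norm]
      simp [norm_smul, abs_of_nonneg (hr0 i)]
    have h1 := (hsub i hplus) j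
    have h2 := (hsub i hminus) j
    simp only [cube, mem_setOf_eq, mem_Icc] at h1 h2
    have e1 : (c i + (r i) • EuclideanSpace.single j (1:ℝ)) j = c i j + r i := by
      simp [EuclideanSpace.single_apply]
    have e2 : (c i - (r i) • EuclideanSpace.single j (1:ℝ)) j = c i j - r i := by
      simp [EuclideanSpace.single_apply]
    rw [e1] at h1
    rw [e2] at h2
    exact ⟨h2.1, h1.2⟩
  -- every cut ball is contained in some slab with 1 ≤ k ≤ M
  have hball_slab : ∀ i ∈ F, ∃ j : Fin d, ∃ k ∈ Finset.Icc 1 M,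
      closedBall (c i) (r i) ⊆ slab j k := by
    intro i hi
    rw [hF, Finset.mem_filter] at hi
    have hcut := hi.2
    -- some coordinate does not fit in any grid interval
    have hj : ∃ j : Fin d, ¬ ∃ ℓ : ℕ, ℓ < M ∧
        (ℓ : ℝ) * εc ≤ c i j - r i ∧ c i j + r i ≤ ((ℓ : ℝ) + 1) * εc := by
      by_contra h
      push_neg at h
      choose ℓ hℓM hℓl hℓu using h
      refine hcut ⟨ℓ, hℓM, ?_⟩
      intro x hx j
      have hdj : |x j - c i j| ≤ r i := by
        have := coord_dist_le x (c i) j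
        rw [Real.dist_eq] at this
        exact this.trans (mem_closedBall.mp hx)
      rw [abs_le] at hdj
      exact ⟨by linarith [hℓl j], by linarith [hℓu j]⟩
    obtain ⟨j, hj⟩ := hj
    obtain ⟨hc0, hc1⟩ := hcoord i j
    obtain ⟨k, hk1, hkM, hkd⟩ := onedim_cross εc hεc0 M hMεc (c i j) (r i)
      (hr0 i) hc0 hc1 hj
    refine ⟨j, k, Finset.mem_Icc.mpr ⟨hk1, hkM⟩, ?_⟩
    intro x hx
    intro i'
    have hcube := (hsub i hx) i'
    simp only [cube, mem_setOf_eq, mem_Icc] at hcube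
    by_cases hij : i' = j
    · subst hij
      have hdj : |x i' - c i i'| ≤ r i := by
        have := coord_dist_le x (c i) i'
        rw [Real.dist_eq] at this
        exact this.trans (mem_closedBall.mp hx)
      rw [abs_le] at hdj hkd
      have hrε : r i ≤ εs := hrs i
      simp only [mem_Icc, if_true, eq_self_iff_true]
      constructor
      · linarith [hdj.1, hkd.2]
      · linarith [hdj.2, hkd.1]
    · simp only [if_neg hij, mem_Icc]
      exact hcube
  -- volume of each slab
  have hslab_vol : ∀ (j : Fin d) (k : ℕ),
      volume (slab j k) = ENNReal.ofReal (4 * εs) := by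
    intro j k
    rw [hslab]
    rw [volume_box]
    rw [Finset.prod_eq_single j]
    · simp only [if_true, eq_self_iff_true]
      congr 1
      ring
    · intro b _ hb
      simp [if_neg hb]
    · intro h
      exact absurd (Finset.mem_univ j) h
  -- assemble
  have hmeas : ∀ i ∈ F, MeasurableSet (closedBall (c i) (r i)) :=
    fun i _ => measurableSet_closedBall
  have hpd : (↑F : Set (Fin n)).PairwiseDisjoint
      (fun i => closedBall (c i) (r i)) :=
    fun i _ j _ hij => hdisj i j hij
  calc ∑ i ∈ F, volume (closedBall (c i) (r i))
      = volume (⋃ i ∈ F, closedBall (c i) (r i)) :=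
        (measure_biUnion_finset hpd hmeas).symm
    _ ≤ volume (⋃ j : Fin d, ⋃ k ∈ Finset.Icc 1 M, slab j k) := by
        apply measure_mono
        intro x hx
        simp only [mem_iUnion] at hx ⊢
        obtain ⟨i, hi, hxi⟩ := hx
        obtain ⟨j, k, hk, hsub'⟩ := hball_slab i hi
        exact ⟨j, k, hk, hsub' hxi⟩
    _ ≤ ∑ j : Fin d, volume (⋃ k ∈ Finset.Icc 1 M, slab j k) := measure_iUnion_fintype_le _ _
    _ ≤ ∑ j : Fin d, ∑ k ∈ Finset.Icc 1 M, volume (slab j k) :=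
        Finset.sum_le_sum fun j _ => measure_biUnion_finset_le _ _
    _ = ∑ j : Fin d, ∑ k ∈ Finset.Icc 1 M, ENNReal.ofReal (4 * εs) := by
        simp_rw [hslab_vol]
    _ = (d : ℝ≥0∞) * ((M : ℝ≥0∞) * ENNReal.ofReal (4 * εs)) := by
        simp [Finset.sum_const, Nat.card_Icc, mul_assoc]
    _ = ENNReal.ofReal (4 * d * εs / εc) := by
        rw [← ENNReal.ofReal_natCast d, ← ENNReal.ofReal_natCast M,
          ← ENNReal.ofReal_mul (by positivity), ← ENNReal.ofReal_mul (by positivity)]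
        congr 1
        rw [hM]
        field_simp
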